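/- For any labeled-graph (Λ, 𝒢_Λ), the graph product W(Λ, 𝒢_Λ) is isomorphic as a group to the graph product W(Λ₀, 𝒢_{Λ₀}) of its T₀-quotient. -/

import Mathlib

open Monoid
open scoped commutatorElement

section GraphProduct

variable {V : Type} (Γ : SimpleGraph V) (G : V → Type) [∀ v, Group (G v)]

/-- The relations of the graph product: the normal closure of the commutators
`[g, h]` with `g ∈ G u`, `h ∈ G v` and `u, v` adjacent. -/
def gpRel : Subgroup (CoprodI G) :=
  Subgroup.normalClosure
    {x | ∃ (u v : V) (g : G u) (h : G v), Γ.Adj u v ∧ x = ⁅CoprodI.of g, CoprodI.of h⁆}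

instance : (gpRel Γ G).Normal := Subgroup.normalClosure_normal

/-- The graph product of the family of groups `G` over the graph `Γ`. -/
def GP := CoprodI G ⧸ gpRel Γ G

instance : Group (GP Γ G) := QuotientGroup.Quotient.group _

/-- The canonical map from a vertex group into the graph product. -/
def GP.of (v : V) : G v →* GP Γ G := (QuotientGroup.mk' (gpRel Γ G)).comp CoprodI.of

/-- The subgroup `W(U)` of the graph product generated by the images of the
vertex groups `G u`, `u ∈ U`. -/
def WS (U : Set V) : Subgroup (GP Γ G) := ⨆ u ∈ U, (GP.of Γ G u).range

/-- The support of an element: the smallest vertex set `S` with `g ∈ W(S)`. -/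
def supp (g : GP Γ G) : Set V := ⋂₀ {S : Set V | g ∈ WS Γ G S}

/-- The cyclic support of an element. -/
def supc (g : GP Γ G) : Set V := {u | ∀ w : GP Γ G, u ∈ supp Γ G (w * g * w⁻¹)}

end GraphProduct

/-- A group is directly-indecomposable cyclic if it is infinite cyclic or
cyclic of prime-power order. -/
def DICyclic (G : Type) [Group G] : Prop :=
  IsCyclic G ∧ (Infinite G ∨ ∃ p n : ℕ, p.Prime ∧ Nat.card G = p ^ n)

/-- Word length with respect to a set `S` of generators. -/
noncomputable def wordLength {G : Type} [Group G] (S : Set G) (g : G) : ℕ :=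
  sInf {n | ∃ l : List G, (∀ a ∈ l, a ∈ S) ∧ l.length = n ∧ l.prod = g}

/-- The equivalence relation: `u ∼ v` iff `u` and `v` lie in exactly the same
maximal cliques. -/
def simSetoid {V : Type} (Λ : SimpleGraph V) : Setoid V :=
  ⟨fun u v => ∀ s : Set V, Maximal Λ.IsClique s → (u ∈ s ↔ v ∈ s),
   ⟨fun _ _ _ => Iff.rfl, fun h s hs => (h s hs).symm, fun h h' s hs => (h s hs).trans (h' s hs)⟩⟩

/-- The `T₀`-quotient graph. -/
def T0Q {V : Type} (Λ : SimpleGraph V) : SimpleGraph (Quotient (simSetoid Λ)) where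
  Adj a b := a ≠ b ∧ ∃ u v : V,
    Quotient.mk (simSetoid Λ) u = a ∧ Quotient.mk (simSetoid Λ) v = b ∧ Λ.Adj u v
  symm := ⟨by rintro a b ⟨hne, u, v, hu, hv, h⟩; exact ⟨hne.symm, v, u, hv, hu, h.symm⟩⟩
  loopless := ⟨by rintro a ⟨hne, -⟩; exact hne rfl⟩

/-- The vertex group of the `T₀`-quotient at a class `a`: the direct product
of the vertex groups over the class. -/
def classGroup {V : Type} (Λ : SimpleGraph V) (G : V → Type) [∀ v, Group (G v)]
    (a : Quotient (simSetoid Λ)) : Type :=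
  ∀ v : {v : V // Quotient.mk (simSetoid Λ) v = a}, G v.1

instance {V : Type} (Λ : SimpleGraph V) (G : V → Type) [∀ v, Group (G v)]
    (a : Quotient (simSetoid Λ)) : Group (classGroup Λ G a) :=
  inferInstanceAs (Group (∀ v : {v : V // Quotient.mk (simSetoid Λ) v = a}, G v.1))

/-!
Two `∼`-equivalent vertices lie in a common maximal clique, so every `∼`-class spans a complete
subgraph of `Λ`; and two distinct classes are either completely joined or not joined at all.
Hence `Λ` is the blow-up of `Λ₀` obtained by replacing each vertex `ũ` by a complete graph on
the class `ũ`. Collapsing such cliques does not change the graph product: the vertex groups of a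
clique pairwise commute, so together they generate a copy of their direct product, and the
remaining commutation relations match vertex by vertex. Both directions of the isomorphism come
from the universal property of the graph product.
-/

namespace GP

variable {V : Type} (Γ : SimpleGraph V) (G : V → Type) [∀ v, Group (G v)]

def lift {H : Type*} [Group H] (f : ∀ v, G v →* H)
    (hf : ∀ u v, Γ.Adj u v → ∀ (g : G u) (h : G v), Commute (f u g) (f v h)) :
    GP Γ G →* H :=
  QuotientGroup.lift _ (CoprodI.lift f) <| by
    refine Subgroup.normalClosure_le_normal ?_
    rintro _ ⟨u, v, g, h, hadj, rfl⟩
    simpa only [SetLike.mem_coe, MonoidHom.mem_ker, map_commutatorElement, CoprodI.lift_of,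
      commutatorElement_eq_one_iff_commute] using hf u v hadj g h

theorem hom_ext {H : Type*} [Group H] {f f' : GP Γ G →* H}
    (h : ∀ v, f.comp (GP.of Γ G v) = f'.comp (GP.of Γ G v)) : f = f' :=
  QuotientGroup.monoidHom_ext _ <| CoprodI.ext_hom _ _ h

theorem of_commute {u v : V} (huv : Γ.Adj u v) (g : G u) (h : G v) :
    Commute (GP.of Γ G u g) (GP.of Γ G v h) := by
  rw [← commutatorElement_eq_one_iff_commute]
  exact (QuotientGroup.eq_one_iff _).2 (Subgroup.subset_normalClosure ⟨u, v, g, h, huv, rfl⟩)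

end GP

namespace SimpleGraph

variable {V W : Type}

structure IsCliqueBlowup (Γ : SimpleGraph V) (Δ : SimpleGraph W) (π : V → W) : Prop where
  adj_of_map_eq : ∀ ⦃u v⦄, π u = π v → u ≠ v → Γ.Adj u v
  adj_map : ∀ ⦃u v⦄, Γ.Adj u v → π u ≠ π v → Δ.Adj (π u) (π v)
  adj_of_adj_map : ∀ ⦃u v⦄, Δ.Adj (π u) (π v) → Γ.Adj u v

theorem adj_of_sim_of_isClique [Finite V] (Λ : SimpleGraph V) {c : Set V} (hc : Λ.IsClique c)
    {u u' v v' : V} (hu : Quotient.mk (simSetoid Λ) u = Quotient.mk _ u') (hu' : u' ∈ c)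
    (hv : Quotient.mk (simSetoid Λ) v = Quotient.mk _ v') (hv' : v' ∈ c) (hne : u ≠ v) :
    Λ.Adj u v := by
  obtain ⟨s, hcs, hs⟩ := Finite.exists_le_maximal (p := Λ.IsClique) hc
  exact hs.prop ((Quotient.exact hu s hs).2 (hcs hu')) ((Quotient.exact hv s hs).2 (hcs hv')) hne

theorem isCliqueBlowup_T0Q [Finite V] (Λ : SimpleGraph V) :
    Λ.IsCliqueBlowup (T0Q Λ) (Quotient.mk (simSetoid Λ)) where
  adj_of_map_eq _ v h hne := adj_of_sim_of_isClique Λ (isClique_singleton v) h rfl rfl rfl hne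
  adj_map u v h hne := show (T0Q Λ).Adj _ _ from ⟨hne, u, v, rfl, rfl, h⟩
  adj_of_adj_map u v := by
    rintro ⟨hne, u', v', hu, hv, h⟩
    exact adj_of_sim_of_isClique Λ (isClique_pair.2 fun _ => h) hu.symm (by simp) hv.symm
      (by simp) (by rintro rfl; exact hne rfl)

end SimpleGraph

namespace GP

variable {V W : Type} [DecidableEq V] {Γ : SimpleGraph V} {Δ : SimpleGraph W} {π : V → W}
  (G : V → Type) [∀ v, Group (G v)]

abbrev fiberGroup (π : V → W) (a : W) : Type := ∀ v : {v // π v = a}, G v.1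

noncomputable def ofMulSingle (Δ : SimpleGraph W) (π : V → W) (u : V) :
    G u →* GP Δ (fiberGroup G π) :=
  (GP.of Δ (fiberGroup G π) (π u)).comp
    (MonoidHom.mulSingle (fun v : {v // π v = π u} => G v.1) ⟨u, rfl⟩)

theorem ofMulSingle_eq {u : V} {a : W} (h : π u = a) (g : G u) :
    ofMulSingle G Δ π u g = GP.of Δ (fiberGroup G π) a (Pi.mulSingle ⟨u, h⟩ g) := by
  subst h
  rfl

noncomputable def collapse (h : Γ.IsCliqueBlowup Δ π) : GP Γ G →* GP Δ (fiberGroup G π) :=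
  GP.lift Γ G (ofMulSingle G Δ π) fun u v huv g k => by
    by_cases hπ : π u = π v
    · have hne : (⟨u, hπ⟩ : {w // π w = π v}) ≠ ⟨v, rfl⟩ := by simpa using huv.ne
      rw [ofMulSingle_eq G hπ]
      exact (Pi.mulSingle_commute (f := fun i : {w // π w = π v} => G i.1) hne g k).map
        (GP.of Δ (fiberGroup G π) (π v))
    · exact GP.of_commute Δ _ (h.adj_map huv hπ) _ _

variable [Fintype V] [DecidableEq W]

noncomputable def ofFiberGroup (h : Γ.IsCliqueBlowup Δ π) (a : W) :
    fiberGroup G π a →* GP Γ G :=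
  MonoidHom.noncommPiCoprod (fun i => GP.of Γ G i.1) fun i j hij =>
    GP.of_commute Γ G (h.adj_of_map_eq (i.2.trans j.2.symm) (Subtype.coe_injective.ne hij))

noncomputable def expand (h : Γ.IsCliqueBlowup Δ π) : GP Δ (fiberGroup G π) →* GP Γ G :=
  GP.lift Δ _ (ofFiberGroup G h) fun a b hab f k =>
    MonoidHom.commute_noncommPiCoprod _ (fun j y =>
      (MonoidHom.commute_noncommPiCoprod _ (fun i x =>
        GP.of_commute Γ G (h.adj_of_adj_map (by rw [i.2, j.2]; exact hab.symm)) y x) f).symm) k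

theorem ofFiberGroup_mulSingle (h : Γ.IsCliqueBlowup Δ π) {a : W} (i : {v // π v = a})
    (x : G i) :
    ofFiberGroup G h a (Pi.mulSingle i x) = GP.of Γ G i x :=
  MonoidHom.noncommPiCoprod_mulSingle _ _ _

theorem expand_comp_collapse (h : Γ.IsCliqueBlowup Δ π) :
    (expand G h).comp (collapse G h) = MonoidHom.id _ :=
  GP.hom_ext _ _ fun u => MonoidHom.ext fun g => ofFiberGroup_mulSingle G h ⟨u, rfl⟩ g

theorem collapse_comp_expand (h : Γ.IsCliqueBlowup Δ π) :
    (collapse G h).comp (expand G h) = MonoidHom.id _ :=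
  GP.hom_ext _ _ fun a => MonoidHom.pi_ext fun i x => by
    change collapse G h (ofFiberGroup G h a (Pi.mulSingle i x)) = _
    rw [ofFiberGroup_mulSingle]
    exact ofMulSingle_eq G i.2 x

noncomputable def mulEquivOfIsCliqueBlowup (h : Γ.IsCliqueBlowup Δ π) :
    GP Γ G ≃* GP Δ (fiberGroup G π) :=
  (collapse G h).toMulEquiv (expand G h) (expand_comp_collapse G h) (collapse_comp_expand G h)

end GP

theorem graph_product_iso_t0_quotient_general
    {V : Type} [Fintype V] (Λ : SimpleGraph V)
    (G : V → Type) [∀ v, Group (G v)] :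
    Nonempty (GP Λ G ≃* GP (T0Q Λ) (classGroup Λ G)) := by
  classical
  -- `classGroup Λ G` unfolds to `GP.fiberGroup G (Quotient.mk (simSetoid Λ))`.
  exact ⟨GP.mulEquivOfIsCliqueBlowup G (SimpleGraph.isCliqueBlowup_T0Q Λ)⟩

/-- The graph product of a labeled-graph is isomorphic to the graph product of
its `T₀`-quotient. -/
theorem graph_product_iso_t0_quotient
    {V : Type} [Fintype V] [Nonempty V] (Λ : SimpleGraph V)
    (G : V → Type) [∀ v, Group (G v)] [∀ v, Nontrivial (G v)] :
    Nonempty (GP Λ G ≃* GP (T0Q Λ) (classGroup Λ G)) :=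
  graph_product_iso_t0_quotient_general Λ G
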